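/- arXiv:2104.01349 — 4 statements merged into one kernel-verified Lean document; each statement's English description precedes it below -/
import Mathlib

section
/- Fix a nonpositive integer ĉ, a real number a with 0 < a < 1, and finite sets of positive integers F_1, F_2 with {0,1,...,-ĉ} ⊆ F_1 ∪ (-ĉ - F_2). Define H = [(F_1 ∪ (-ĉ - F_2)) \ {0,1,...,-ĉ}] ∪ [F_1 ∩ (-ĉ - F_2)]. Then for every nonnegative integer y with y ∉ F_1 and for any sequence c_s ∉ {0,-1,-2,...} with c_s → ĉ, the masses ∏_{f ∈ F_1}(y - f) · ∏_{f ∈ F_2}(y + c_s + f) · a^y Γ(y + c_s)/y! converge to ∏_{h ∈ H}(y - h) · a^y as s → ∞. -/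
/-!
Write `m = -ĉ`. The functional equation gives `Γ(z) = Γ(z + m + 1) / ∏_{j=0}^{m} (z + m - j)`,
and reindexing `F₂` by `f ↦ m - f` turns `∏_{f ∈ F₂} (z + f)` into `∏_{g ∈ m - F₂} (z + m - g)`.
Cancelling the factors indexed by `(m - F₂) ∩ {0,…,m}` leaves, with `z = y + c_s`, a quotient
that is continuous at `c_s = ĉ`: its denominator runs over `{0,…,m} \ (m - F₂) ⊆ F₁`, which
avoids `y`. At `c_s = ĉ` the numerator is `Γ(y + 1) = y!`, and regrouping the finite products of
`y - h` over `F₁`, `m - F₂` and `{0,…,m}` produces exactly the product over `H`.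
-/

open Filter Topology Finset

namespace Finset

variable {ι : Type*} [DecidableEq ι]

theorem prod_mul_prod_sdiff_eq_prod_union_inter_mul_prod_sdiff {M : Type*} [CommMonoid M]
    {A B I : Finset ι} (f : ι → M) (hI : I ⊆ A ∪ B) (hAB : A ∩ B ⊆ I) :
    (∏ x ∈ A, f x) * ∏ x ∈ B \ I, f x =
      (∏ x ∈ (A ∪ B) \ I ∪ A ∩ B, f x) * ∏ x ∈ I \ B, f x := by
  have hAI : A ∩ I = A ∩ B ∪ I \ B := by
    ext x
    have := @hI x; have := @hAB x
    simp only [mem_inter, mem_union, mem_sdiff] at *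
    tauto
  have hsdiff : Disjoint (A \ I) (B \ I) := by
    rw [disjoint_left]
    intro x hA hB
    exact (mem_sdiff.1 hA).2 (hAB (mem_inter.2 ⟨(mem_sdiff.1 hA).1, (mem_sdiff.1 hB).1⟩))
  rw [prod_union (disjoint_sdiff_self_left.mono_right hAB), union_sdiff_distrib,
    prod_union hsdiff, ← prod_inter_mul_prod_sdiff A I, hAI,
    prod_union (disjoint_sdiff.mono_left inter_subset_right)]
  ac_rfl

theorem prod_sdiff_div_prod_sdiff₀ {K : Type*} [CommGroupWithZero K]
    (B I : Finset ι) (f : ι → K) (h : ∏ x ∈ B ∩ I, f x ≠ 0) :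
    (∏ x ∈ B \ I, f x) / ∏ x ∈ I \ B, f x = (∏ x ∈ B, f x) / ∏ x ∈ I, f x := by
  rw [← prod_inter_mul_prod_sdiff B I, ← prod_inter_mul_prod_sdiff I B, inter_comm I B,
    mul_div_mul_left _ _ h]

end Finset

namespace Real

theorem Gamma_add_natCast_eq_mul_prod (z : ℝ) (n : ℕ) (h : ∀ k < n, z + k ≠ 0) :
    Gamma (z + n) = Gamma z * ∏ k ∈ range n, (z + k) := by
  induction n with
  | zero => simp
  | succ n ih =>
    rw [Nat.cast_succ, ← add_assoc, Gamma_add_one (h n n.lt_succ_self),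
      ih fun k hk => h k (hk.trans n.lt_succ_self), prod_range_succ]
    ring

theorem Gamma_add_intCast_add_one_eq_mul_prod_Icc (z : ℝ) {m : ℤ} (hm : 0 ≤ m)
    (h : ∀ j ∈ Icc 0 m, z + j ≠ 0) :
    Gamma (z + m + 1) = Gamma z * ∏ j ∈ Icc 0 m, (z + j) := by
  lift m to ℕ using hm
  rw [Int.Icc_eq_finset_map, prod_map]
  have := Gamma_add_natCast_eq_mul_prod z (m + 1) fun k hk => by
    simpa using h k (by simp; omega)
  simpa [add_assoc, Int.toNat_add_nat] using this

end Real

theorem prod_add_mul_Gamma_eq_prod_sdiff_div_prod_sdiff_mul_Gamma {c0 : ℤ} (hc0 : c0 ≤ 0)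
    (F : Finset ℤ) {z : ℝ} (hz : ∀ n : ℕ, z ≠ -n) :
    (∏ f ∈ F, (z + f)) * Real.Gamma z =
      (∏ g ∈ F.image (fun f => -c0 - f) \ Icc 0 (-c0), (z - c0 - g)) /
        (∏ j ∈ Icc 0 (-c0) \ F.image (fun f => -c0 - f), (z - c0 - j)) *
        Real.Gamma (z - c0 + 1) := by
  have hreflect : ∏ j ∈ Icc 0 (-c0), (z - c0 - j) = ∏ j ∈ Icc 0 (-c0), (z + j) :=
    prod_nbij' (fun j => -c0 - j) (fun j => -c0 - j) (by intro j; simp; omega)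
      (by intro j; simp; omega) (by simp) (by simp) (by intro j _; push_cast; ring)
  have hpoles : ∀ j ∈ Icc 0 (-c0), z + j ≠ 0 := by
    intro j hj hzero
    have hcast : ((j.toNat : ℤ) : ℝ) = j := by
      exact_mod_cast Int.toNat_of_nonneg (mem_Icc.1 hj).1
    exact hz j.toNat (by push_cast at hcast; linarith)
  have hIne : ∏ j ∈ Icc 0 (-c0), (z - c0 - j) ≠ 0 := by
    rw [hreflect]; exact prod_ne_zero_iff.2 hpoles
  have hGamma : Real.Gamma (z - c0 + 1) = Real.Gamma z * ∏ j ∈ Icc 0 (-c0), (z - c0 - j) := by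
    rw [hreflect, ← Real.Gamma_add_intCast_add_one_eq_mul_prod_Icc z (by omega) hpoles]
    push_cast; ring_nf
  have hF : ∏ f ∈ F, (z + f) = ∏ g ∈ F.image (fun f => -c0 - f), (z - c0 - g) := by
    rw [prod_image fun f _ g _ h => by simpa using h]
    exact prod_congr rfl fun f _ => by push_cast; ring
  rw [prod_sdiff_div_prod_sdiff₀, hF, hGamma]
  · field_simp
  · exact prod_ne_zero_iff.2 fun j hj =>
      prod_ne_zero_iff.1 hIne j (mem_inter.1 hj).2

theorem tendsto_prod_add_mul_Gamma {α : Type*} {l : Filter α} {c : α → ℝ} {c0 : ℤ}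
    (hc0 : c0 ≤ 0) (F : Finset ℤ) {x : ℝ} (hx : ∀ n : ℕ, x + 1 ≠ -n)
    (hden : ∏ j ∈ Icc 0 (-c0) \ F.image (fun f => -c0 - f), (x - j) ≠ 0)
    (hpoles : ∀ s, ∀ n : ℕ, x + c s ≠ -n) (hc : Tendsto c l (𝓝 c0)) :
    Tendsto (fun s => (∏ f ∈ F, (x + c s + f)) * Real.Gamma (x + c s)) l
      (𝓝 ((∏ g ∈ F.image (fun f => -c0 - f) \ Icc 0 (-c0), (x - g)) /
        (∏ j ∈ Icc 0 (-c0) \ F.image (fun f => -c0 - f), (x - j)) * Real.Gamma (x + 1))) := by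
  have hcont : ContinuousAt (fun t : ℝ =>
      (∏ g ∈ F.image (fun f => -c0 - f) \ Icc 0 (-c0), (x + t - c0 - g)) /
        (∏ j ∈ Icc 0 (-c0) \ F.image (fun f => -c0 - f), (x + t - c0 - j)) *
        Real.Gamma (x + t - c0 + 1)) c0 := by
    have hGamma : ContinuousAt (fun t : ℝ => Real.Gamma (x + t - c0 + 1)) c0 := by
      refine ContinuousAt.comp (g := Real.Gamma) ?_ (by fun_prop)
      rw [add_sub_cancel_right]
      exact (Real.differentiableAt_Gamma hx).continuousAt
    have hden' : ∏ j ∈ Icc 0 (-c0) \ F.image (fun f => -c0 - f), (x + c0 - c0 - j) ≠ 0 := by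
      simpa using hden
    fun_prop (disch := assumption)
  simpa using (hcont.tendsto.comp hc).congr fun s =>
    (prod_add_mul_Gamma_eq_prod_sdiff_div_prod_sdiff_mul_Gamma hc0 F (hpoles s)).symm

theorem mass_convergence_general (c0 : ℤ) (hc0 : c0 ≤ 0) (a : ℝ)
    (F1 F2 : Finset ℤ) (h1 : ∀ f ∈ F1, 0 < f) (h2 : ∀ f ∈ F2, 0 < f)
    (hsub : Finset.Icc 0 (-c0) ⊆ F1 ∪ F2.image (fun f => -c0 - f))
    (H : Finset ℤ)
    (hH : H = ((F1 ∪ F2.image (fun f => -c0 - f)) \ Finset.Icc 0 (-c0)) ∪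
      (F1 ∩ F2.image (fun f => -c0 - f)))
    (y : ℕ) (hy : (y : ℤ) ∉ F1)
    (c : ℕ → ℝ) (hcnp : ∀ s, ∀ n : ℕ, c s ≠ -(n : ℝ))
    (hc : Filter.Tendsto c Filter.atTop (nhds (c0 : ℝ))) :
    Filter.Tendsto
      (fun s => (∏ f ∈ F1, ((y : ℝ) - (f : ℝ))) * (∏ f ∈ F2, ((y : ℝ) + c s + (f : ℝ))) *
        a ^ y * Real.Gamma ((y : ℝ) + c s) / (y.factorial : ℝ))
      Filter.atTop
      (nhds ((∏ h ∈ H, ((y : ℝ) - (h : ℝ))) * a ^ y)) := by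
  -- By `hsub` the index set lies in `F1`, which avoids `y`.
  have hden : ∏ j ∈ Icc 0 (-c0) \ F2.image (fun f => -c0 - f), ((y : ℝ) - j) ≠ 0 := by
    refine prod_ne_zero_iff.2 fun j hj => sub_ne_zero.2 fun hjy => ?_
    have hjF1 : j ∈ F1 := by
      obtain ⟨hjI, hjimg⟩ := mem_sdiff.1 hj
      simpa [hjimg] using hsub hjI
    have hjy : j = y := by exact_mod_cast hjy.symm
    exact hy (hjy ▸ hjF1)
  have hGamma := tendsto_prod_add_mul_Gamma hc0 F2
    (fun n h => by linarith [(Nat.cast_nonneg n : (0 : ℝ) ≤ n)]) hden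
    (fun s n h => hcnp s (y + n) (by push_cast; linarith)) hc
  set img := F2.image (fun f => -c0 - f)
  set I := Icc 0 (-c0)
  have hinter : F1 ∩ img ⊆ I := by
    intro x hx
    obtain ⟨hx1, hx2⟩ := mem_inter.1 hx
    obtain ⟨f, hf, rfl⟩ := mem_image.1 hx2
    have := h1 _ hx1; have := h2 f hf
    simp only [I, mem_Icc]; omega
  convert ((hGamma.const_mul (∏ f ∈ F1, ((y : ℝ) - f))).mul_const (a ^ y)).div_const
    (y.factorial : ℝ) using 2
  · ring
  · rw [hH, Real.Gamma_nat_eq_factorial]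
    field_simp
    linear_combination -a ^ y * prod_mul_prod_sdiff_eq_prod_union_inter_mul_prod_sdiff
      (fun x : ℤ => (y : ℝ) - x) hsub hinter

/-- Fix a nonpositive integer `ĉ`, a real `a` with `0 < a < 1`, and finite sets of
positive integers `F₁, F₂` with `{0,…,-ĉ} ⊆ F₁ ∪ (-ĉ - F₂)`, and let
`H = [(F₁ ∪ (-ĉ - F₂)) \ {0,…,-ĉ}] ∪ [F₁ ∩ (-ĉ - F₂)]`. Then for every
nonnegative integer `y ∉ F₁` and every sequence `c_s → ĉ` avoiding nonpositive
integers, the masses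
`∏_{f∈F₁}(y-f) ∏_{f∈F₂}(y+c_s+f) a^y Γ(y+c_s)/y!` converge to `∏_{h∈H}(y-h) a^y`. -/
theorem mass_convergence (c0 : ℤ) (hc0 : c0 ≤ 0) (a : ℝ) (ha : 0 < a) (ha1 : a < 1)
    (F1 F2 : Finset ℤ) (h1 : ∀ f ∈ F1, 0 < f) (h2 : ∀ f ∈ F2, 0 < f)
    (hsub : Finset.Icc 0 (-c0) ⊆ F1 ∪ F2.image (fun f => -c0 - f))
    (H : Finset ℤ)
    (hH : H = ((F1 ∪ F2.image (fun f => -c0 - f)) \ Finset.Icc 0 (-c0)) ∪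
      (F1 ∩ F2.image (fun f => -c0 - f)))
    (y : ℕ) (hy : (y : ℤ) ∉ F1)
    (c : ℕ → ℝ) (hcnp : ∀ s, ∀ n : ℕ, c s ≠ -(n : ℝ))
    (hc : Filter.Tendsto c Filter.atTop (nhds (c0 : ℝ))) :
    Filter.Tendsto
      (fun s => (∏ f ∈ F1, ((y : ℝ) - (f : ℝ))) * (∏ f ∈ F2, ((y : ℝ) + c s + (f : ℝ))) *
        a ^ y * Real.Gamma ((y : ℝ) + c s) / (y.factorial : ℝ))
      Filter.atTop
      (nhds ((∏ h ∈ H, ((y : ℝ) - (h : ℝ))) * a ^ y)) :=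
  mass_convergence_general c0 hc0 a F1 F2 h1 h2 hsub H hH y hy c hcnp hc
end

section
/- Let ĉ ∈ {-1,-2,...} and let F_1, F_2 be finite sets of positive integers satisfying {0,1,...,-ĉ} ⊆ F_1 ∪ (-ĉ - F_2). Then the measure ν = Σ_{x ≥ 0, x ∉ F_1} ∏_{h ∈ H}(x - h) a^x δ_x, with H defined as usual, is not of the form C · Σ_{x ≥ s} ∏_{f ∈ U_1}(x - s - f) ∏_{f ∈ U_2}(x - s + d + f) b^{x-s} Γ(x - s + d)/(x-s)! δ_x for any pair (U_1, U_2) of finite sets of positive integers, any real numbers b, C with 0 < b < 1, C > 0, any d ∉ {0,-1,-2,...}, and any integer s; i.e., ν is not a translated Christoffel transform of a Meixner measure. -/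
/-!
Suppose `ν = C · ρ`, where `ρ(s + n) = P(n) bⁿ Γ(n + d) / n!` with `P` the Christoffel polynomial.
Comparing least points of the supports gives `s = 0`; the covering hypothesis puts `-ĉ` in `F₁`,
so `ν(-ĉ) = 0`, which forces `-ĉ ∈ U₁`.
For large `n` we have `ν(n) = Q(n) aⁿ` with `Q = ∏_{h ∈ H} (X - h)`. Taking the ratio of
consecutive masses removes the Gamma factor and leaves the polynomial identity
`a (X + 1) Q(X + 1) P(X) = b (X + d) Q(X) P(X + 1)`. Comparing leading coefficients gives `a = b`.
At `X = -d` the right side vanishes while `P(-d) ≠ 0`; as the roots of `Q` are integers and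
`d ∉ {0, -1, …}`, this forces `d = k + 1` with `k ∈ ℕ`. Then `Γ(n + d) / n! = (n + 1) ⋯ (n + k)`, so
`Q = C · P · (X + 1) ⋯ (X + k)`, which fails at `X = -ĉ`: it is a root of `P` but not of `Q`.
-/

open Polynomial Filter Lagrange
open scoped Nat

lemma Polynomial.eq_of_eventually_eval_natCast_eq {R : Type*} [CommRing R] [IsDomain R]
    [CharZero R] {p q : R[X]} (h : ∀ᶠ n : ℕ in atTop, p.eval (n : R) = q.eval (n : R)) :
    p = q := by
  obtain ⟨N, hN⟩ := eventually_atTop.1 h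
  refine eq_of_infinite_eval_eq p q
    ((Set.Ici_infinite N).image Nat.cast_injective.injOn |>.mono ?_)
  rintro _ ⟨n, hn, rfl⟩
  exact hN n hn

lemma Lagrange.isRoot_nodal_iff {ι R : Type*} [CommRing R] [IsDomain R] {s : Finset ι}
    {v : ι → R} {x : R} : (nodal s v).IsRoot x ↔ ∃ i ∈ s, x = v i := by
  simp [IsRoot, eval_nodal, Finset.prod_eq_zero_iff, sub_eq_zero]

lemma Lagrange.isRoot_nodal_intCast_iff {s : Finset ℤ} {m : ℤ} :
    (nodal s (fun i : ℤ => (i : ℝ))).IsRoot m ↔ m ∈ s := by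
  rw [isRoot_nodal_iff]
  simp

lemma ne_neg_intCast_of_nonneg {d : ℝ} (hd : ∀ n : ℕ, d ≠ -n) {m : ℤ} (hm : 0 ≤ m) :
    d ≠ -m := by
  lift m to ℕ using hm
  exact_mod_cast hd m

lemma exists_nat_eq_add_one_of_eq_intCast_add_one {d : ℝ} (hd : ∀ n : ℕ, d ≠ -n) {m : ℤ}
    (hm : d = m + 1) : ∃ k : ℕ, d = k + 1 := by
  obtain hm0 | hm0 := le_or_gt 0 m
  · lift m to ℕ using hm0
    exact ⟨m, mod_cast hm⟩
  · exact (ne_neg_intCast_of_nonneg hd (m := -m - 1) (by omega) (by push_cast; linarith)).elim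

lemma Real.Gamma_natCast_add_ne_zero {d : ℝ} (hd : ∀ n : ℕ, d ≠ -n) (n : ℕ) :
    Real.Gamma (n + d) ≠ 0 :=
  Real.Gamma_ne_zero fun m hm => hd (n + m) (by push_cast; linarith)

noncomputable def meixnerWeight (b d : ℝ) (n : ℕ) : ℝ := b ^ n * Real.Gamma (n + d) / n !

section Meixner

variable {Q P : ℝ[X]} {a b c d : ℝ}

lemma meixnerWeight_ne_zero (hb : b ≠ 0) (hd : ∀ n : ℕ, d ≠ -n) (n : ℕ) :
    meixnerWeight b d n ≠ 0 := by
  have := Real.Gamma_natCast_add_ne_zero hd n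
  unfold meixnerWeight
  positivity

lemma meixnerWeight_succ (hd : ∀ n : ℕ, d ≠ -n) (n : ℕ) :
    (n + 1) * meixnerWeight b d (n + 1) = b * (n + d) * meixnerWeight b d n := by
  have hnd : (n : ℝ) + d ≠ 0 := fun h => hd n (by linarith)
  simp only [meixnerWeight, Nat.factorial_succ, Nat.cast_mul, Nat.cast_succ, pow_succ,
    add_right_comm _ (1 : ℝ) d, Real.Gamma_add_one hnd]
  field_simp

lemma meixnerWeight_nat_add_one (b : ℝ) (k n : ℕ) :
    meixnerWeight b (k + 1) n = b ^ n * (ascPochhammer ℝ k).eval ((n : ℝ) + 1) := by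
  rw [meixnerWeight, ← add_assoc, ← Nat.cast_add, Real.Gamma_nat_eq_factorial,
    ← Nat.factorial_mul_ascFactorial, ← ascPochhammer_nat_eq_ascFactorial]
  push_cast
  field_simp

lemma shift_identity_of_eventually_eq (hb : b ≠ 0) (hc : c ≠ 0) (hd : ∀ n : ℕ, d ≠ -n)
    (h : ∀ᶠ n : ℕ in atTop, Q.eval (n : ℝ) * a ^ n = c * P.eval (n : ℝ) * meixnerWeight b d n) :
    C a * (X + 1) * Q.comp (X + 1) * P = C b * (X + C d) * Q * P.comp (X + 1) := by
  refine eq_of_eventually_eval_natCast_eq ?_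
  filter_upwards [h, (tendsto_add_atTop_nat 1).eventually h] with n h₀ h₁
  push_cast at h₁
  simp only [eval_mul, eval_C, eval_add, eval_X, eval_one, eval_comp]
  refine mul_right_cancel₀ (mul_ne_zero hc (meixnerWeight_ne_zero hb hd n)) ?_
  linear_combination (-(a * (n + 1) * Q.eval ((n : ℝ) + 1))) * h₀
    + (n + 1) * Q.eval (n : ℝ) * h₁
    + c * Q.eval (n : ℝ) * P.eval ((n : ℝ) + 1) * meixnerWeight_succ (b := b) hd n

lemma eq_of_shift_identity (hQ : Q ≠ 0) (hP : P ≠ 0)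
    (h : C a * (X + 1) * Q.comp (X + 1) * P = C b * (X + C d) * Q * P.comp (X + 1)) :
    a = b := by
  have hdeg : (X + 1 : ℝ[X]).natDegree ≠ 0 := by
    rw [← C_1, natDegree_X_add_C]
    exact one_ne_zero
  have hlead : (X + 1 : ℝ[X]).leadingCoeff = 1 := by rw [← C_1, leadingCoeff_X_add_C]
  have := congrArg leadingCoeff h
  simp only [leadingCoeff_mul, leadingCoeff_comp hdeg, leadingCoeff_C, leadingCoeff_X_add_C,
    hlead, one_pow, mul_one] at this
  exact mul_right_cancel₀ (mul_ne_zero (leadingCoeff_ne_zero.2 hQ) (leadingCoeff_ne_zero.2 hP))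
    (by linear_combination this)

lemma eq_C_mul_ascPochhammer_of_eventually_eq {k : ℕ} (hb : b ≠ 0)
    (h : ∀ᶠ n : ℕ in atTop,
      Q.eval (n : ℝ) * b ^ n = c * P.eval (n : ℝ) * meixnerWeight b (k + 1) n) :
    Q = C c * P * (ascPochhammer ℝ k).comp (X + 1) := by
  refine eq_of_eventually_eval_natCast_eq ?_
  filter_upwards [h] with n hn
  rw [meixnerWeight_nat_add_one] at hn
  simp only [eval_mul, eval_C, eval_comp, eval_add, eval_X, eval_one]
  exact mul_right_cancel₀ (pow_ne_zero n hb) (by linear_combination hn)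

theorem exists_eq_C_mul_ascPochhammer_of_eventually_eq (hQ : Q ≠ 0)
    (hQroots : ∀ x, Q.IsRoot x → ∃ m : ℤ, x = m) (hP : ¬ P.IsRoot (-d))
    (hb : b ≠ 0) (hc : c ≠ 0) (hd : ∀ n : ℕ, d ≠ -n)
    (h : ∀ᶠ n : ℕ in atTop, Q.eval (n : ℝ) * a ^ n = c * P.eval (n : ℝ) * meixnerWeight b d n) :
    ∃ k : ℕ, Q = C c * P * (ascPochhammer ℝ k).comp (X + 1) := by
  have hshift := shift_identity_of_eventually_eq hb hc hd h
  obtain rfl : a = b := eq_of_shift_identity hQ (fun h0 => hP (by simp [h0])) hshift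
  obtain ⟨k, rfl⟩ : ∃ k : ℕ, d = k + 1 := by
    have h0 := congrArg (eval (-d)) hshift
    simp only [eval_mul, eval_C, eval_add, eval_X, eval_one, eval_comp, neg_add_cancel, mul_zero,
      zero_mul, mul_eq_zero] at h0
    obtain ⟨m, hm⟩ : ∃ m : ℤ, -d + 1 = m := by
      rcases h0 with ((ha | hd1) | hQd) | hPd
      · exact absurd ha hb
      · exact ⟨0, by simpa using hd1⟩
      · exact hQroots _ hQd
      · exact absurd hPd hP
    exact exists_nat_eq_add_one_of_eq_intCast_add_one hd (m := -m) (by push_cast; linarith)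
  exact ⟨k, eq_C_mul_ascPochhammer_of_eventually_eq hb h⟩

end Meixner

noncomputable def christoffelPoly (U1 U2 : Finset ℤ) (d : ℝ) : ℝ[X] :=
  nodal U1 (fun f => (f : ℝ)) * nodal U2 (fun f => -d - f)

noncomputable def christoffelMeixnerMass (U1 U2 : Finset ℤ) (b C d : ℝ) (s y : ℤ) : ℝ :=
  if s ≤ y then
    C * (∏ f ∈ U1, ((y : ℝ) - (s : ℝ) - (f : ℝ))) *
      (∏ f ∈ U2, ((y : ℝ) - (s : ℝ) + d + (f : ℝ))) *
      b ^ (y - s).toNat * Real.Gamma ((y : ℝ) - (s : ℝ) + d) /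
      ((y - s).toNat.factorial : ℝ)
  else 0

section Christoffel

variable {U1 U2 : Finset ℤ} {b C d : ℝ} {s : ℤ}

lemma eval_christoffelPoly (x : ℝ) :
    (christoffelPoly U1 U2 d).eval x = (∏ f ∈ U1, (x - f)) * ∏ f ∈ U2, (x + d + f) := by
  simp only [christoffelPoly, eval_mul, eval_nodal]
  congr 1
  exact Finset.prod_congr rfl fun _ _ => by ring

lemma christoffelPoly_isRoot_iff {x : ℝ} :
    (christoffelPoly U1 U2 d).IsRoot x ↔ (∃ f ∈ U1, x = f) ∨ ∃ f ∈ U2, x = -d - f := by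
  simp only [christoffelPoly, root_mul, isRoot_nodal_iff]

lemma christoffelPoly_not_isRoot_neg (hU1 : ∀ f ∈ U1, 0 < f) (hU2 : ∀ f ∈ U2, 0 < f)
    (hd : ∀ n : ℕ, d ≠ -n) : ¬ (christoffelPoly U1 U2 d).IsRoot (-d) := by
  rw [christoffelPoly_isRoot_iff]
  rintro (⟨f, hf, hfd⟩ | ⟨f, hf, hfd⟩)
  · exact ne_neg_intCast_of_nonneg hd (hU1 f hf).le (by linarith)
  · have : (0 : ℝ) < f := mod_cast hU2 f hf
    linarith

lemma christoffelPoly_isRoot_natCast_iff (hU2 : ∀ f ∈ U2, 0 < f) (hd : ∀ n : ℕ, d ≠ -n)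
    (n : ℕ) : (christoffelPoly U1 U2 d).IsRoot n ↔ (n : ℤ) ∈ U1 := by
  rw [christoffelPoly_isRoot_iff]
  constructor
  · rintro (⟨f, hf, hnf⟩ | ⟨f, hf, hnf⟩)
    · rwa [show (n : ℤ) = f by exact_mod_cast hnf]
    · exact (ne_neg_intCast_of_nonneg hd (m := n + f) (by linarith [hU2 f hf])
        (by push_cast; linarith)).elim
  · exact fun hn => Or.inl ⟨n, hn, by simp⟩

lemma christoffelMeixnerMass_of_lt {y : ℤ} (hy : y < s) :
    christoffelMeixnerMass U1 U2 b C d s y = 0 :=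
  if_neg hy.not_ge

lemma christoffelMeixnerMass_add_natCast (n : ℕ) :
    christoffelMeixnerMass U1 U2 b C d s (s + n) =
      C * (christoffelPoly U1 U2 d).eval (n : ℝ) * meixnerWeight b d n := by
  simp [christoffelMeixnerMass, eval_christoffelPoly, meixnerWeight]
  ring

lemma christoffelMeixnerMass_add_natCast_eq_zero_iff (hU2 : ∀ f ∈ U2, 0 < f) (hb : b ≠ 0)
    (hC : C ≠ 0) (hd : ∀ n : ℕ, d ≠ -n) (n : ℕ) :
    christoffelMeixnerMass U1 U2 b C d s (s + n) = 0 ↔ (n : ℤ) ∈ U1 := by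
  rw [christoffelMeixnerMass_add_natCast, ← christoffelPoly_isRoot_natCast_iff hU2 hd, IsRoot]
  simp [hC, meixnerWeight_ne_zero hb hd]

end Christoffel

theorem nu_not_christoffel_meixner_general
    (a : ℝ)
    (c0 : ℤ) (hc0 : c0 < 0)
    (F1 F2 : Finset ℤ) (h1 : ∀ f ∈ F1, 0 < f) (h2 : ∀ f ∈ F2, 0 < f)
    (hsub : Finset.Icc 0 (-c0) ⊆ F1 ∪ F2.image (fun f => -c0 - f))
    (H : Finset ℤ)
    (hH : H = ((F1 ∪ F2.image (fun f => -c0 - f)) \ Finset.Icc 0 (-c0)) ∪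
      (F1 ∩ F2.image (fun f => -c0 - f)))
    (ν : ℤ → ℝ)
    (hν : ∀ y : ℤ, ν y = if 0 ≤ y ∧ y ∉ F1 then
      (∏ h ∈ H, ((y : ℝ) - (h : ℝ))) * a ^ y.toNat else 0) :
    ¬ ∃ (U1 U2 : Finset ℤ) (b C d : ℝ) (s : ℤ),
      (∀ f ∈ U1, 0 < f) ∧ (∀ f ∈ U2, 0 < f) ∧
      0 < b ∧ b < 1 ∧ 0 < C ∧ (∀ n : ℕ, d ≠ -(n : ℝ)) ∧
      (∀ y : ℤ, ν y = if s ≤ y then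
        C * (∏ f ∈ U1, ((y : ℝ) - (s : ℝ) - (f : ℝ))) *
          (∏ f ∈ U2, ((y : ℝ) - (s : ℝ) + d + (f : ℝ))) *
          b ^ (y - s).toNat * Real.Gamma ((y : ℝ) - (s : ℝ) + d) /
          ((y - s).toNat.factorial : ℝ)
        else 0) := by
  rintro ⟨U1, U2, b, C, d, s, hU1, hU2, hb, -, hC, hd, hρ⟩
  change ∀ y, ν y = christoffelMeixnerMass U1 U2 b C d s y at hρ
  have hρ0 :=
    christoffelMeixnerMass_add_natCast_eq_zero_iff (U1 := U1) (s := s) hU2 hb.ne' hC.ne' hd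
  obtain ⟨m, rfl⟩ : ∃ m : ℕ, c0 = -m := ⟨c0.natAbs, by omega⟩
  have hmF1 : (m : ℤ) ∈ F1 := by
    have := hsub (Finset.mem_Icc.2 ⟨by omega, le_rfl⟩)
    grind
  have h0H : (0 : ℤ) ∉ H := by grind
  have hmH : (m : ℤ) ∉ H := by grind
  set Q := nodal H (fun h : ℤ => (h : ℝ))
  have hQ : ∀ n : ℕ, Q.IsRoot n ↔ (n : ℤ) ∈ H := fun n => by
    simpa using isRoot_nodal_intCast_iff (m := n)
  have hνQ : ∀ n : ℕ, (n : ℤ) ∉ F1 → ν n = Q.eval (n : ℝ) * a ^ n := fun n hn => by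
    simp [hν, hn, Q, eval_nodal]
  have hν0 : ν 0 ≠ 0 := by
    rw [← Nat.cast_zero, hνQ 0 fun h => (h1 0 h).false, pow_zero, mul_one]
    exact (hQ 0).not.2 h0H
  obtain rfl : s = 0 := le_antisymm
    (not_lt.1 fun hs => hν0 (by rw [hρ, christoffelMeixnerMass_of_lt hs]))
    (not_lt.1 fun hs => (hρ0 0).not.2 (fun h => (hU1 0 h).false)
      (by rw [Nat.cast_zero, add_zero, ← hρ, hν, if_neg (by omega)]))
  have hmU1 : (m : ℤ) ∈ U1 := by
    rw [← hρ0, zero_add, ← hρ, hν, if_neg (by simp [hmF1])]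
  have hev : ∀ᶠ n : ℕ in atTop, Q.eval (n : ℝ) * a ^ n =
      C * (christoffelPoly U1 U2 d).eval (n : ℝ) * meixnerWeight b d n := by
    filter_upwards [Nat.cofinite_eq_atTop ▸
      (F1.finite_toSet.preimage Nat.cast_injective.injOn).eventually_cofinite_notMem] with n hn
    rw [← hνQ n hn, ← zero_add (n : ℤ), hρ, christoffelMeixnerMass_add_natCast]
  obtain ⟨k, hk⟩ := exists_eq_C_mul_ascPochhammer_of_eventually_eq (Q := Q) nodal_ne_zero
    (fun x hx => by obtain ⟨h, -, rfl⟩ := isRoot_nodal_iff.1 hx; exact ⟨h, rfl⟩)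
    (christoffelPoly_not_isRoot_neg hU1 hU2 hd) hb.ne' hC.ne' hd hev
  refine (hQ m).not.2 hmH (hk ▸ root_mul_right_of_isRoot _ (root_mul_left_of_isRoot _ ?_))
  exact (christoffelPoly_isRoot_natCast_iff hU2 hd m).2 hmU1

/-- For `ĉ ∈ {-1,-2,…}` and `F₁, F₂` finite sets of positive integers with
`{0,…,-ĉ} ⊆ F₁ ∪ (-ĉ - F₂)`, the measure
`ν = Σ_{x≥0, x∉F₁} ∏_{h∈H}(x-h) a^x δ_x` is never of the form
`C·ρ^{(U₁,U₂)}_{b,d}(x-s)`, i.e. never a translated Christoffel transform of a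
Meixner measure. -/
theorem nu_not_christoffel_meixner
    (a : ℝ) (ha : 0 < a) (ha1 : a < 1)
    (c0 : ℤ) (hc0 : c0 < 0)
    (F1 F2 : Finset ℤ) (h1 : ∀ f ∈ F1, 0 < f) (h2 : ∀ f ∈ F2, 0 < f)
    (hsub : Finset.Icc 0 (-c0) ⊆ F1 ∪ F2.image (fun f => -c0 - f))
    (H : Finset ℤ)
    (hH : H = ((F1 ∪ F2.image (fun f => -c0 - f)) \ Finset.Icc 0 (-c0)) ∪
      (F1 ∩ F2.image (fun f => -c0 - f)))
    (ν : ℤ → ℝ)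
    (hν : ∀ y : ℤ, ν y = if 0 ≤ y ∧ y ∉ F1 then
      (∏ h ∈ H, ((y : ℝ) - (h : ℝ))) * a ^ y.toNat else 0) :
    ¬ ∃ (U1 U2 : Finset ℤ) (b C d : ℝ) (s : ℤ),
      (∀ f ∈ U1, 0 < f) ∧ (∀ f ∈ U2, 0 < f) ∧
      0 < b ∧ b < 1 ∧ 0 < C ∧ (∀ n : ℕ, d ≠ -(n : ℝ)) ∧
      (∀ y : ℤ, ν y = if s ≤ y then
        C * (∏ f ∈ U1, ((y : ℝ) - (s : ℝ) - (f : ℝ))) *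
          (∏ f ∈ U2, ((y : ℝ) - (s : ℝ) + d + (f : ℝ))) *
          b ^ (y - s).toNat * Real.Gamma ((y : ℝ) - (s : ℝ) + d) /
          ((y - s).toNat.factorial : ℝ)
        else 0) :=
  nu_not_christoffel_meixner_general a c0 hc0 F1 F2 h1 h2 hsub H hH ν hν
end

section
/- For the Laguerre polynomials L_n^α(x) = Σ_{j=0}^n ((-x)^j / j!)·C(n+α, n-j) and Meixner polynomials m_n^{a,c}(x) = (a^n/(1-a)^n) Σ_{j=0}^n a^{-j} C(x,j) C(-x-c, n-j), one has, for each fixed n, c and complex x: lim_{a→1} (a-1)^n m_n^{a,c}(x/(1-a)) = L_n^{c-1}(x). -/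
open Filter Topology

/-- Generalized binomial coefficient `C(y,j) = y(y-1)⋯(y-j+1)/j!`. -/
noncomputable def genBinom (y : ℂ) (j : ℕ) : ℂ :=
  (∏ i ∈ Finset.range j, (y - (i : ℂ))) / (j.factorial : ℂ)

/-- Meixner polynomial `m_n^{a,c}(x) = (a^n/(1-a)^n) Σ_j a^{-j} C(x,j) C(-x-c,n-j)`. -/
noncomputable def meixner (a c : ℝ) (n : ℕ) (x : ℂ) : ℂ :=
  ((a : ℂ) ^ n / (1 - (a : ℂ)) ^ n) *
    ∑ j ∈ Finset.range (n + 1),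
      (a : ℂ) ^ (-(j : ℤ)) * genBinom x j * genBinom (-x - (c : ℂ)) (n - j)

/-- Laguerre polynomial `L_n^α(x) = Σ_j ((-x)^j/j!) C(n+α, n-j)`. -/
noncomputable def laguerre (α : ℝ) (n : ℕ) (x : ℂ) : ℂ :=
  ∑ j ∈ Finset.range (n + 1),
    ((-x) ^ j / (j.factorial : ℂ)) * genBinom ((n : ℂ) + (α : ℂ)) (n - j)

/-!
Put `t = a⁻¹ - 1`, so that `a⁻ʲ = (1 + t)ʲ`. Expanding `(1 + t)ʲ` and applying trinomial revision
and Chu–Vandermonde rewrites the Meixner sum as `∑ₖ tᵏ C(y,k) C(-c-k, n-k)`. With `y = x/(1-a)` the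
only singular factors are then `(1-a)ᵏ C(x/(1-a), k) = ∏_{i<k} (x - i(1-a)) / k!`, which are
polynomial in `a`. Hence `(a-1)ⁿ mₙ(x/(1-a))` agrees, for `a ≠ 0, 1`, with a polynomial in `a`
whose value at `a = 1` is `(-1)ⁿ ∑ₖ xᵏ/k! C(-c-k, n-k) = Lₙ^{c-1}(x)` by upper negation.
-/

open Finset

namespace Ring

variable {R : Type*} [CommRing R] [BinomialRing R]

theorem sum_Icc_choose_smul_choose_mul_choose (y z : R) {k n : ℕ} (hkn : k ≤ n) :
    ∑ j ∈ Icc k n, j.choose k • (choose y j * choose z (n - j)) =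
      choose y k * choose (y - k + z) (n - k) := by
  rw [← Ico_add_one_right_eq_Icc, sum_Ico_eq_sum_range, add_choose_eq _ (Commute.all _ _),
    Nat.sum_antidiagonal_eq_sum_range_succ_mk, mul_sum, show n + 1 - k = n - k + 1 by omega]
  refine sum_congr rfl fun m _ => ?_
  rw [← smul_mul_assoc, choose_smul_choose y (Nat.le_add_right k m), Nat.add_sub_cancel_left,
    Nat.sub_add_eq, mul_assoc]

theorem sum_one_add_pow_mul_choose_mul_choose (t y z : R) (n : ℕ) :
    ∑ j ∈ range (n + 1), (1 + t) ^ j * (choose y j * choose z (n - j)) =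
      ∑ k ∈ range (n + 1), t ^ k * (choose y k * choose (y - k + z) (n - k)) := by
  calc ∑ j ∈ range (n + 1), (1 + t) ^ j * (choose y j * choose z (n - j))
      = ∑ j ∈ range (n + 1), ∑ k ∈ range (j + 1),
          t ^ k * j.choose k • (choose y j * choose z (n - j)) := by
        refine sum_congr rfl fun j _ => ?_
        rw [add_comm, add_pow, sum_mul]
        refine sum_congr rfl fun k _ => ?_
        rw [one_pow, mul_one, nsmul_eq_mul, mul_assoc]
    _ = ∑ k ∈ range (n + 1), ∑ j ∈ Icc k n,
          t ^ k * j.choose k • (choose y j * choose z (n - j)) := by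
        refine sum_comm' fun j k => ?_
        simp only [mem_range, mem_Icc]
        omega
    _ = _ := by
        refine sum_congr rfl fun k hk => ?_
        rw [← mul_sum, sum_Icc_choose_smul_choose_mul_choose y z (by grind)]

end Ring

theorem Ring.choose_neg_eq_neg_one_pow_mul {R : Type*} [Ring R] [BinomialRing R] (r : R)
    (n : ℕ) : Ring.choose (-r) n = (-1) ^ n * Ring.choose (r + n - 1) n := by
  rw [Ring.choose_neg, Units.smul_def, Int.coe_negOnePow_natCast, zsmul_eq_mul]
  push_cast
  rfl

theorem genBinom_eq_choose (y : ℂ) (j : ℕ) : genBinom y j = Ring.choose y j := by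
  rw [Ring.choose_eq_smul, ← Polynomial.aeval_eq_smeval, Polynomial.aeval_def,
    ← Polynomial.eval_map, descPochhammer_map, descPochhammer_eval_eq_prod_range, genBinom,
    smul_eq_mul, div_eq_inv_mul]

theorem pow_mul_genBinom_div {s : ℂ} (hs : s ≠ 0) (x : ℂ) (k : ℕ) :
    s ^ k * genBinom (x / s) k = (∏ i ∈ range k, (x - i * s)) / k.factorial := by
  have hpow : s ^ k = ∏ _i ∈ range k, s := by simp
  rw [genBinom, mul_div_assoc', hpow, ← prod_mul_distrib]
  congr 1
  exact prod_congr rfl fun i _ => by field_simp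

theorem laguerre_eq_neg_one_pow_mul_sum (α : ℝ) (n : ℕ) (x : ℂ) :
    laguerre α n x = (-1) ^ n *
      ∑ k ∈ range (n + 1), x ^ k / k.factorial * genBinom (-(α + 1) - k) (n - k) := by
  rw [laguerre, mul_sum]
  refine sum_congr rfl fun k hk => ?_
  obtain ⟨m, rfl⟩ := Nat.exists_eq_add_of_le (by grind : k ≤ n)
  rw [Nat.add_sub_cancel_left, genBinom_eq_choose, genBinom_eq_choose, sub_eq_add_neg, ← neg_add,
    Ring.choose_neg_eq_neg_one_pow_mul, neg_pow, pow_add]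
  push_cast
  have hsign : (-1 : ℂ) ^ m * (-1) ^ m = 1 := by rw [← mul_pow]; norm_num
  rw [show (α : ℂ) + 1 + k + m - 1 = k + m + α by ring]
  linear_combination (-(-1) ^ k * x ^ k / k.factorial * Ring.choose ((k : ℂ) + m + α) m) * hsign

theorem meixner_eq_sum (a c : ℝ) (n : ℕ) (y : ℂ) :
    meixner a c n y = (a : ℂ) ^ n / (1 - a) ^ n * ∑ k ∈ range (n + 1),
      ((a : ℂ)⁻¹ - 1) ^ k * (genBinom y k * genBinom (-c - k) (n - k)) := by
  have key := Ring.sum_one_add_pow_mul_choose_mul_choose ((a : ℂ)⁻¹ - 1) y (-y - c) n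
  simp only [add_sub_cancel] at key
  simp only [meixner, genBinom_eq_choose, zpow_neg, zpow_natCast, ← inv_pow, mul_assoc]
  rw [key]
  congr 2 with k
  ring_nf

theorem sub_one_pow_mul_meixner {a : ℝ} (ha₀ : a ≠ 0) (ha₁ : a ≠ 1) (c : ℝ) (n : ℕ) (y : ℂ) :
    ((a : ℂ) - 1) ^ n * meixner a c n y = (-1) ^ n * ∑ k ∈ range (n + 1),
      (a : ℂ) ^ (n - k) * ((1 - a) ^ k * genBinom y k) * genBinom (-c - k) (n - k) := by
  have ha : (a : ℂ) ≠ 0 := by exact_mod_cast ha₀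
  have hb : (1 : ℂ) - a ≠ 0 := sub_ne_zero.mpr (by exact_mod_cast ha₁.symm)
  rw [meixner_eq_sum, mul_sum, mul_sum, mul_sum]
  refine sum_congr rfl fun k hk => ?_
  obtain ⟨m, rfl⟩ := Nat.exists_eq_add_of_le (by grind : k ≤ n)
  rw [Nat.add_sub_cancel_left, show (a : ℂ) - 1 = -(1 - a) by ring,
    show (a : ℂ)⁻¹ - 1 = (1 - a) / a by field_simp, div_pow, neg_pow, pow_add]
  field_simp
  ring

/-- Basic limit from Meixner to Laguerre polynomials:
`lim_{a→1} (a-1)^n m_n^{a,c}(x/(1-a)) = L_n^{c-1}(x)`. -/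
theorem meixner_to_laguerre_limit (n : ℕ) (c : ℝ) (x : ℂ) :
    Filter.Tendsto
      (fun a : ℝ => ((a : ℂ) - 1) ^ n * meixner a c n (x / (1 - (a : ℂ))))
      (nhdsWithin 1 {a : ℝ | a ≠ 0 ∧ a ≠ 1})
      (nhds (laguerre (c - 1) n x)) := by
  let F : ℝ → ℂ := fun a => (-1) ^ n * ∑ k ∈ range (n + 1), (a : ℂ) ^ (n - k) *
    ((∏ i ∈ range k, (x - i * (1 - a))) / k.factorial) * genBinom (-c - k) (n - k)
  have hF : Continuous F := by fun_prop
  have hF₁ : F 1 = laguerre (c - 1) n x := by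
    simp [F, laguerre_eq_neg_one_pow_mul_sum]
  have hmeixner : ∀ a ∈ {a : ℝ | a ≠ 0 ∧ a ≠ 1},
      ((a : ℂ) - 1) ^ n * meixner a c n (x / (1 - (a : ℂ))) = F a := by
    rintro a ⟨ha₀, ha₁⟩
    have hb : (1 : ℂ) - a ≠ 0 := sub_ne_zero.mpr (by exact_mod_cast ha₁.symm)
    simp only [sub_one_pow_mul_meixner ha₀ ha₁, pow_mul_genBinom_div hb, F]
  rw [← hF₁]
  exact ((hF.tendsto 1).mono_left nhdsWithin_le_nhds).congr'
    (eventually_nhdsWithin_of_forall fun a ha => (hmeixner a ha).symm)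
end

section
/- For c a nonpositive integer and n ≥ -c + 1, the Meixner polynomial satisfies the factorization m_n^{a,c}(x) = [∏_{j=0}^{-c}(x - j) / ∏_{j=0}^{-c}(n - j)] · m_{n+c-1}^{a, 2-c}(x + c - 1). -/
/-!
Write `S_n(u, v) = ∑_{i+j=n} B^i C(u,i) C(v,j)`, the coefficient of `t^n` in `(1+Bt)^u (1+t)^v`;
then `m_n^{a,c}(x) = (a/(1-a))^n S_n(x, -x-c)` with `B = a⁻¹`. These sums satisfy a three-term
recurrence in `n`. For `c = -k` and `n = k+1+d`, the sequence `n(n-1)⋯(n-k) · S_n(x, k-x)`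
satisfies in `d` the recurrence of `S_d(x-k-1, -x-1)`, so the two sequences are proportional; the
factor is read off at `d = 0`. At `d = 0` the product `C(x,i) C(k-x,j)` with `i+j = k+1` equals
`(-1)^j C(k+1,i) C(x,k+1)`, and the binomial theorem gives `S_{k+1}(x, k-x) = (B-1)^{k+1} C(x,k+1)`.
-/

open Finset Nat

lemma genBinom_mul_factorial (y : ℂ) (j : ℕ) : genBinom y j * j ! = ∏ i ∈ range j, (y - i) :=
  div_mul_cancel₀ _ (Nat.cast_ne_zero.mpr (factorial_ne_zero j))

lemma succ_mul_genBinom_succ (y : ℂ) (r : ℕ) :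
    ((r : ℂ) + 1) * genBinom y (r + 1) = (y - r) * genBinom y r := by
  rw [genBinom, genBinom, prod_range_succ, factorial_succ]
  push_cast
  field_simp

lemma prod_range_sub_reflect (s y : ℂ) (j : ℕ) :
    ∏ l ∈ range j, (s + j - 1 - y - l) = (-1) ^ j * ∏ l ∈ range j, (y - (s + l)) := by
  induction j with
  | zero => simp
  | succ j ih =>
    rw [prod_range_succ', prod_range_succ, pow_succ]
    push_cast
    simp only [show ∀ l : ℂ, s + (j + 1) - 1 - y - (l + 1) = s + j - 1 - y - l from
      fun l => by ring, ih]
    ring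

lemma genBinom_mul_genBinom_sub (x : ℂ) (i j : ℕ) :
    genBinom x i * genBinom (i + j - 1 - x) j =
      (-1) ^ j * (i + j).choose i * genBinom x (i + j) := by
  have hprod : (∏ l ∈ range i, (x - l)) * ∏ l ∈ range j, (x - (i + l)) =
      ∏ l ∈ range (i + j), (x - l) := by
    rw [prod_range_add]
    push_cast
    rfl
  have hfac : ((i + j).choose i : ℂ) * i ! * j ! = (i + j)! := by
    exact_mod_cast choose_symm_add ▸ add_choose_mul_factorial_mul_factorial i j
  have hchoose : ((i + j).choose i : ℂ) ≠ 0 := by exact_mod_cast (choose_pos (by omega)).ne'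
  rw [genBinom, genBinom, genBinom, prod_range_sub_reflect, ← hprod, ← hfac]
  field_simp

noncomputable def binomConvTerm (B u v : ℂ) (p : ℕ × ℕ) : ℂ :=
  B ^ p.1 * genBinom u p.1 * genBinom v p.2

noncomputable def binomConv (B u v : ℂ) (n : ℕ) : ℂ :=
  ∑ p ∈ antidiagonal n, binomConvTerm B u v p

lemma meixner_eq_binomConv (a c : ℝ) (n : ℕ) (x : ℂ) :
    meixner a c n x = (a : ℂ) ^ n / (1 - a) ^ n * binomConv (a : ℂ)⁻¹ x (-x - c) n := by
  rw [meixner, binomConv, Nat.sum_antidiagonal_eq_sum_range_succ_mk]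
  simp [binomConvTerm, zpow_neg, inv_pow]

section

variable (B u v : ℂ)

lemma binomConv_zero : binomConv B u v 0 = 1 := by
  simp [binomConv, binomConvTerm, genBinom]

lemma binomConv_one : binomConv B u v 1 = v + B * u := by
  rw [binomConv, Nat.sum_antidiagonal_succ]
  simp [binomConvTerm, genBinom]

lemma sum_antidiagonal_succ_fst_mul_binomConvTerm (n : ℕ) :
    ∑ p ∈ antidiagonal (n + 1), (p.1 : ℂ) * binomConvTerm B u v p =
      B * ∑ p ∈ antidiagonal n, (u - p.1) * binomConvTerm B u v p := by
  rw [Nat.sum_antidiagonal_succ, mul_sum, Nat.cast_zero, zero_mul, zero_add]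
  refine sum_congr rfl fun p _ => ?_
  simp only [binomConvTerm]
  push_cast
  linear_combination (B ^ p.1 * B * genBinom v p.2) * succ_mul_genBinom_succ u p.1

lemma sum_antidiagonal_succ_snd_mul_binomConvTerm (n : ℕ) :
    ∑ p ∈ antidiagonal (n + 1), (p.2 : ℂ) * binomConvTerm B u v p =
      ∑ p ∈ antidiagonal n, (v - p.2) * binomConvTerm B u v p := by
  rw [Nat.sum_antidiagonal_succ', Nat.cast_zero, zero_mul, zero_add]
  refine sum_congr rfl fun p _ => ?_
  simp only [binomConvTerm]
  push_cast
  linear_combination (B ^ p.1 * genBinom u p.1) * succ_mul_genBinom_succ v p.2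

lemma natCast_mul_binomConv (n : ℕ) :
    (n : ℂ) * binomConv B u v n =
      ∑ p ∈ antidiagonal n, (p.1 : ℂ) * binomConvTerm B u v p +
        ∑ p ∈ antidiagonal n, (p.2 : ℂ) * binomConvTerm B u v p := by
  rw [binomConv, mul_sum, ← sum_add_distrib]
  refine sum_congr rfl fun p hp => ?_
  rw [← mem_antidiagonal.mp hp]
  push_cast
  ring

lemma succ_mul_binomConv_succ (n : ℕ) :
    ((n : ℂ) + 1) * binomConv B u v (n + 1) =
      B * ∑ p ∈ antidiagonal n, (u - p.1) * binomConvTerm B u v p +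
        ∑ p ∈ antidiagonal n, (v - p.2) * binomConvTerm B u v p := by
  rw [← sum_antidiagonal_succ_fst_mul_binomConvTerm, ← sum_antidiagonal_succ_snd_mul_binomConvTerm,
    ← natCast_mul_binomConv]
  push_cast
  ring

-- The coefficient of `t^(n+1)` in `(1+Bt)(1+t) F' = (Bu(1+t) + v(1+Bt)) F`,
-- the differential equation of `F = (1+Bt)^u (1+t)^v`.
def BinomConvRecurrence (f : ℕ → ℂ) : Prop :=
  ∀ n : ℕ, ((n : ℂ) + 2) * f (n + 2) =
    (B * u + v - (B + 1) * (n + 1)) * f (n + 1) + B * (u + v - n) * f n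

lemma binomConv_recurrence : BinomConvRecurrence B u v (binomConv B u v) := by
  intro n
  have hX : ∑ p ∈ antidiagonal (n + 1), (u - p.1) * binomConvTerm B u v p =
      u * binomConv B u v (n + 1) -
        B * ∑ p ∈ antidiagonal n, (u - p.1) * binomConvTerm B u v p := by
    rw [← sum_antidiagonal_succ_fst_mul_binomConvTerm B u v n, binomConv, mul_sum,
      ← sum_sub_distrib]
    simp only [sub_mul]
  have hY : ∑ p ∈ antidiagonal (n + 1), (v - p.2) * binomConvTerm B u v p =
      v * binomConv B u v (n + 1) - ∑ p ∈ antidiagonal n, (v - p.2) * binomConvTerm B u v p := by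
    rw [← sum_antidiagonal_succ_snd_mul_binomConvTerm B u v n, binomConv, mul_sum,
      ← sum_sub_distrib]
    simp only [sub_mul]
  have hXY : ∑ p ∈ antidiagonal n, (u - p.1) * binomConvTerm B u v p +
      ∑ p ∈ antidiagonal n, (v - p.2) * binomConvTerm B u v p =
        (u + v - n) * binomConv B u v n := by
    rw [sub_mul, natCast_mul_binomConv, binomConv, mul_sum]
    simp only [sub_mul, sum_sub_distrib, add_mul, sum_add_distrib]
    ring
  have h := succ_mul_binomConv_succ B u v (n + 1)
  push_cast at h
  linear_combination h + B * hX + hY + (B + 1) * succ_mul_binomConv_succ B u v n + B * hXY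

end

lemma BinomConvRecurrence.eq_mul_binomConv {B u v : ℂ} {f : ℕ → ℂ}
    (hf : BinomConvRecurrence B u v f) (h₁ : f 1 = (v + B * u) * f 0) (n : ℕ) :
    f n = f 0 * binomConv B u v n := by
  induction n using Nat.twoStepInduction with
  | zero => rw [binomConv_zero, mul_one]
  | one => rw [h₁, binomConv_one, mul_comm]
  | more n ih₀ ih₁ =>
    refine mul_left_cancel₀ (a := (n : ℂ) + 2) (by norm_cast) ?_
    linear_combination hf n - f 0 * binomConv_recurrence B u v n
      + (B * u + v - (B + 1) * (n + 1)) * ih₁ + B * (u + v - n) * ih₀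

lemma succ_mul_descFactorial_add_succ (k d : ℕ) :
    ((d : ℂ) + 1) * (k + 1 + d + 1).descFactorial (k + 1) =
      (k + 1 + d + 1) * (k + 1 + d).descFactorial (k + 1) := by
  have h := succ_descFactorial (k + 1 + d) (k + 1)
  rw [show k + 1 + d + 1 - (k + 1) = d + 1 by omega] at h
  exact_mod_cast h

lemma BinomConvRecurrence.descFactorial_mul {B x : ℂ} {k : ℕ} {f : ℕ → ℂ}
    (hf : BinomConvRecurrence B x (k - x) f) :
    BinomConvRecurrence B (x - k - 1) (-x - 1)
      (fun d => ((k + 1 + d).descFactorial (k + 1) : ℂ) * f (k + 1 + d)) := by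
  intro d
  have h := hf (k + 1 + d)
  have h₁ := succ_mul_descFactorial_add_succ k d
  have h₂ := succ_mul_descFactorial_add_succ k (d + 1)
  simp only [show k + 1 + (d + 2) = k + 1 + d + 2 by omega,
    show k + 1 + (d + 1) = k + 1 + d + 1 by omega] at h₁ h₂ ⊢
  push_cast at h h₁ h₂ ⊢
  linear_combination f (k + 1 + d + 2) * h₂
    + ((k + 1 + d + 1).descFactorial (k + 1) : ℂ) * h - B * f (k + 1 + d) * h₁

lemma binomConv_natCast_sub_succ (B x : ℂ) (k : ℕ) :
    binomConv B x (k - x) (k + 1) = (B - 1) ^ (k + 1) * genBinom x (k + 1) := by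
  rw [binomConv, sub_eq_add_neg B, (Commute.all _ _).add_pow', sum_mul]
  refine sum_congr rfl fun p hp => ?_
  have hp : p.1 + p.2 = k + 1 := mem_antidiagonal.mp hp
  have hk : (k : ℂ) = p.1 + p.2 - 1 := by
    rw [← Nat.cast_add, hp]
    push_cast
    ring
  rw [binomConvTerm, hk, mul_assoc, genBinom_mul_genBinom_sub, ← hp, nsmul_eq_mul]
  ring

theorem descFactorial_mul_binomConv (B x : ℂ) (k d : ℕ) :
    ((k + 1 + d).descFactorial (k + 1) : ℂ) * binomConv B x (k - x) (k + 1 + d) =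
      (B - 1) ^ (k + 1) * ((k + 1)! * genBinom x (k + 1)) * binomConv B (x - k - 1) (-x - 1) d := by
  have hf := (binomConv_recurrence B x (k - x)).descFactorial_mul
  have h₀ : ((k + 1 + 0).descFactorial (k + 1) : ℂ) * binomConv B x (k - x) (k + 1 + 0) =
      (B - 1) ^ (k + 1) * ((k + 1)! * genBinom x (k + 1)) := by
    rw [add_zero, descFactorial_self, binomConv_natCast_sub_succ]
    ring
  rw [hf.eq_mul_binomConv ?_ d, h₀]
  -- at `n = k` the last coefficient `B (x + (k - x) - k)` of the recurrence vanishes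
  have h := binomConv_recurrence B x (k - x) k
  have h₁ := succ_mul_descFactorial_add_succ k 0
  simp only [add_zero] at h₁ h₀ ⊢
  push_cast at h h₁ ⊢
  linear_combination binomConv B x (↑k - x) (k + 2) * h₁ + ((k + 1).descFactorial (k + 1) : ℂ) * h

/-- For `c ∈ {0,-1,-2,…}` and `n ≥ -c+1`,
`m_n^{a,c}(x) = [∏_{j=0}^{-c}(x-j)/∏_{j=0}^{-c}(n-j)]·m_{n+c-1}^{a,2-c}(x+c-1)`. -/
theorem meixner_factorization (a : ℝ) (ha0 : a ≠ 0) (ha1 : a ≠ 1)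
    (c : ℤ) (hc : c ≤ 0) (n : ℕ) (hn : -c + 1 ≤ (n : ℤ)) (x : ℂ) :
    meixner a (c : ℝ) n x =
      ((∏ j ∈ Finset.range ((-c).toNat + 1), (x - (j : ℂ))) /
        (∏ j ∈ Finset.range ((-c).toNat + 1), ((n : ℂ) - (j : ℂ)))) *
      meixner a ((2 - c : ℤ) : ℝ) ((n : ℤ) + c - 1).toNat (x + (c : ℂ) - 1) := by
  obtain ⟨k, rfl⟩ : ∃ k : ℕ, c = -k := ⟨(-c).toNat, by omega⟩
  obtain ⟨d, rfl⟩ : ∃ d : ℕ, n = k + 1 + d := ⟨n - (k + 1), by omega⟩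
  have hA0 : (a : ℂ) ≠ 0 := by exact_mod_cast ha0
  have hA1 : (1 : ℂ) - a ≠ 0 := sub_ne_zero.mpr (by exact_mod_cast ha1.symm)
  have hP : ((k + 1 + d).descFactorial (k + 1) : ℂ) ≠ 0 := by
    exact_mod_cast (descFactorial_pos.mpr (by omega)).ne'
  rw [show (-(-(k : ℤ))).toNat = k by omega,
    show ((k + 1 + d : ℕ) + -(k : ℤ) - 1).toNat = d by omega,
    ← genBinom_mul_factorial, ← descPochhammer_eval_eq_prod_range,
    descPochhammer_eval_eq_descFactorial, meixner_eq_binomConv, meixner_eq_binomConv]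
  have hkey := descFactorial_mul_binomConv (a : ℂ)⁻¹ x k d
  have hpow : (a : ℂ) ^ (k + 1) * ((a : ℂ)⁻¹ - 1) ^ (k + 1) = (1 - a) ^ (k + 1) := by
    rw [← mul_pow, mul_sub, mul_inv_cancel₀ hA0, mul_one]
  push_cast
  rw [show -x - -(k : ℂ) = k - x by ring, show x + -(k : ℂ) - 1 = x - k - 1 by ring,
    show -(x - k - 1) - (2 - -(k : ℂ)) = -x - 1 by ring]
  generalize (a : ℂ)⁻¹ = B at hkey hpow
  field_simp
  linear_combination (a : ℂ) ^ (k + 1) * (a : ℂ) ^ d * (1 - a) ^ d * hkey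
    + (a : ℂ) ^ d * (1 - a) ^ d * (k + 1)! * genBinom x (k + 1)
      * binomConv B (x - k - 1) (-x - 1) d * hpow
end
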